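/- arXiv:2001.08902 — 2 statements merged into one kernel-verified Lean document; each statement's English description precedes it below -/
import Mathlib

section
/- Let J be skew-symmetric and X symmetric positive semidefinite, both real n×n, and let u be a unit vector. Let Δ_J = −uuᵀJ − Juuᵀ and Δ_X = −uuᵀX − Xuuᵀ + uuᵀXuuᵀ. Then Δ_J is skew-symmetric, Δ_X is symmetric with X + Δ_X positive semidefinite, and u lies in the common kernel of J + Δ_J and X + Δ_X. -/
/-!
With `P = uuᵀ` and `Q = 1 - P`, one has `X + Δ_X = Q X Q` identically, and `J + Δ_J = Q J Q`
because `P J P = (uᵀ J u) P` vanishes for skew-symmetric `J`. Congruence by the symmetric matrix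
`Q` preserves symmetry, skew-symmetry and positive semidefiniteness, and `Q u = 0` when `uᵀu = 1`.
-/

open Matrix

variable {n R : Type*} [Fintype n] [CommRing R]

lemma transpose_mul_mul_self_of_transpose_eq {Q : Matrix n n R} (hQ : Qᵀ = Q) (M : Matrix n n R) :
    (Q * M * Q)ᵀ = Q * Mᵀ * Q := by
  rw [transpose_mul, transpose_mul, hQ, Matrix.mul_assoc]

lemma dotProduct_mulVec_self_eq_zero_of_transpose_eq_neg [IsAddTorsionFree R]
    {J : Matrix n n R} (hJ : Jᵀ = -J) (u : n → R) : u ⬝ᵥ J *ᵥ u = 0 := by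
  refine self_eq_neg.mp ?_
  calc u ⬝ᵥ J *ᵥ u = u ⬝ᵥ Jᵀ *ᵥ u := by rw [mulVec_transpose, dotProduct_mulVec, dotProduct_comm]
    _ = -(u ⬝ᵥ J *ᵥ u) := by rw [hJ, neg_mulVec, dotProduct_neg]

lemma vecMulVec_self_mul_mul_vecMulVec_self (u : n → R) (M : Matrix n n R) :
    vecMulVec u u * M * vecMulVec u u = (u ⬝ᵥ M *ᵥ u) • vecMulVec u u := by
  rw [Matrix.mul_assoc, mul_vecMulVec, vecMulVec_mul_vecMulVec, vecMulVec_smul]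

section

variable [DecidableEq n]

lemma one_sub_vecMulVec_self_mulVec_self {u : n → R} (hu : u ⬝ᵥ u = 1) :
    (1 - vecMulVec u u) *ᵥ u = 0 := by
  rw [sub_mulVec, one_mulVec, vecMulVec_mulVec, hu, MulOpposite.op_one, one_smul, sub_self]

lemma add_neg_mul_sub_mul_add_mul_mul_eq_one_sub_mul_mul_one_sub (P X : Matrix n n R) :
    X + (-(P * X) - X * P + P * X * P) = (1 - P) * X * (1 - P) := by
  noncomm_ring

lemma add_neg_vecMulVec_self_mul_sub_mul_vecMulVec_self_of_transpose_eq_neg [IsAddTorsionFree R]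
    {J : Matrix n n R} (hJ : Jᵀ = -J) (u : n → R) :
    J + (-(vecMulVec u u * J) - J * vecMulVec u u) =
      (1 - vecMulVec u u) * J * (1 - vecMulVec u u) := by
  have hPJP : vecMulVec u u * J * vecMulVec u u = 0 := by
    rw [vecMulVec_self_mul_mul_vecMulVec_self,
      dotProduct_mulVec_self_eq_zero_of_transpose_eq_neg hJ, zero_smul]
  rw [← add_neg_mul_sub_mul_add_mul_mul_eq_one_sub_mul_mul_one_sub, hPJP, add_zero]

end

theorem structured_perturbation_properties
    (n : ℕ) (J X : Matrix (Fin n) (Fin n) ℝ)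
    (hJ : Jᵀ = -J) (hX : X.PosSemidef)
    (u : Fin n → ℝ) (hu : u ⬝ᵥ u = 1) :
    (-(vecMulVec u u * J) - J * vecMulVec u u)ᵀ =
        -(-(vecMulVec u u * J) - J * vecMulVec u u) ∧
    (-(vecMulVec u u * X) - X * vecMulVec u u + vecMulVec u u * X * vecMulVec u u)ᵀ =
        (-(vecMulVec u u * X) - X * vecMulVec u u + vecMulVec u u * X * vecMulVec u u) ∧
    (X + (-(vecMulVec u u * X) - X * vecMulVec u u +
        vecMulVec u u * X * vecMulVec u u)).PosSemidef ∧
    (J + (-(vecMulVec u u * J) - J * vecMulVec u u)).mulVec u = 0 ∧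
    (X + (-(vecMulVec u u * X) - X * vecMulVec u u +
        vecMulVec u u * X * vecMulVec u u)).mulVec u = 0 := by
  have hJQ := add_neg_vecMulVec_self_mul_sub_mul_vecMulVec_self_of_transpose_eq_neg hJ u
  have hXQ := add_neg_mul_sub_mul_add_mul_mul_eq_one_sub_mul_mul_one_sub (vecMulVec u u) X
  rw [← eq_sub_iff_add_eq'] at hJQ hXQ
  have hXt : Xᵀ = X := hX.isHermitian
  have hQ : (1 - vecMulVec u u)ᵀ = 1 - vecMulVec u u := by simp
  have hQu := one_sub_vecMulVec_self_mulVec_self hu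
  set Q := 1 - vecMulVec u u
  rw [hJQ, hXQ, transpose_sub, transpose_sub, transpose_mul_mul_self_of_transpose_eq hQ,
    transpose_mul_mul_self_of_transpose_eq hQ, hJ, hXt, add_sub_cancel, add_sub_cancel]
  refine ⟨by noncomm_ring, rfl, ?_, ?_, ?_⟩
  · simpa only [conjTranspose_eq_transpose_of_trivial, hQ] using hX.mul_mul_conjTranspose_same Q
  all_goals rw [← mulVec_mulVec, hQu, mulVec_zero]
end

section
/- Let M, D, K be real symmetric positive semidefinite n×n matrices and G real skew-symmetric. The quadratic matrix polynomial P(λ) = λ²M − λ(G − D) + K satisfies det P(λ) ≡ 0 if and only if the kernels of M, D, K, and G have a nontrivial common intersection. -/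
/-!
Evaluating at `λ = 1` gives a singular matrix `M + D + K - G`; pick `v` in its kernel. Skew-symmetry
kills `vᵀ G v`, so `vᵀ M v + vᵀ D v + vᵀ K v = 0`, and as each term is nonnegative, `v` lies in the
kernels of `M`, `D`, `K`, hence of `G` as well. Conversely, a common kernel vector is a kernel vector
of every `P(t)`, so `det P` vanishes at every real point and is the zero polynomial.
-/

open Matrix Polynomial
open scoped ComplexOrder

variable {n : Type*} [Fintype n]

theorem Matrix.dotProduct_mulVec_self_eq_zero_of_transpose_eq_neg {R : Type*} [CommRing R]
    [IsAddTorsionFree R] {G : Matrix n n R} (hG : Gᵀ = -G) (v : n → R) :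
    v ⬝ᵥ G *ᵥ v = 0 := by
  refine self_eq_neg.mp ?_
  calc v ⬝ᵥ G *ᵥ v = v ⬝ᵥ Gᵀ *ᵥ v := by
        rw [mulVec_transpose, dotProduct_comm v (v ᵥ* G), ← dotProduct_mulVec]
    _ = -(v ⬝ᵥ G *ᵥ v) := by rw [hG, neg_mulVec, dotProduct_neg]

theorem Matrix.PosSemidef.mulVec_eq_zero_of_dotProduct_add_mulVec_eq_zero {𝕜 : Type*} [RCLike 𝕜]
    {A B : Matrix n n 𝕜} (hA : A.PosSemidef) (hB : B.PosSemidef) {v : n → 𝕜}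
    (h : star v ⬝ᵥ (A + B) *ᵥ v = 0) : A *ᵥ v = 0 ∧ B *ᵥ v = 0 := by
  rw [add_mulVec, dotProduct_add, add_eq_zero_iff_of_nonneg (hA.dotProduct_mulVec_nonneg v)
    (hB.dotProduct_mulVec_nonneg v)] at h
  exact ⟨(hA.dotProduct_mulVec_zero_iff v).mp h.1, (hB.dotProduct_mulVec_zero_iff v).mp h.2⟩

theorem Matrix.mulVec_eq_zero_of_posSemidef_of_transpose_eq_neg {M D K G : Matrix n n ℝ}
    (hM : M.PosSemidef) (hD : D.PosSemidef) (hK : K.PosSemidef) (hG : Gᵀ = -G) {v : n → ℝ}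
    (hv : (M - (G - D) + K) *ᵥ v = 0) :
    M *ᵥ v = 0 ∧ D *ᵥ v = 0 ∧ K *ᵥ v = 0 ∧ G *ᵥ v = 0 := by
  have hform : star v ⬝ᵥ (M + D + K) *ᵥ v = 0 := by
    have hskew := dotProduct_mulVec_self_eq_zero_of_transpose_eq_neg hG v
    have hdot := congrArg (v ⬝ᵥ ·) hv
    simp only [add_mulVec, sub_mulVec, dotProduct_add, dotProduct_sub, dotProduct_zero] at hdot
    simp only [star_trivial, add_mulVec, dotProduct_add]
    linarith
  obtain ⟨hMDv, hKv⟩ := (hM.add hD).mulVec_eq_zero_of_dotProduct_add_mulVec_eq_zero hK hform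
  obtain ⟨hMv, hDv⟩ := hM.mulVec_eq_zero_of_dotProduct_add_mulVec_eq_zero hD
    (by rw [hMDv, dotProduct_zero])
  refine ⟨hMv, hDv, hKv, ?_⟩
  simpa [add_mulVec, sub_mulVec, hMv, hDv, hKv] using hv

theorem Polynomial.eval_det_quadratic {R : Type*} [CommRing R] [DecidableEq n]
    (A B C₀ : Matrix n n R) (t : R) :
    ((X ^ 2 : R[X]) • A.map C - (X : R[X]) • B.map C + C₀.map C).det.eval t =
      (t ^ 2 • A - t • B + C₀).det := by
  rw [← coe_evalRingHom, RingHom.map_det]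
  congr 1
  ext i j
  simp only [RingHom.mapMatrix_apply, coe_evalRingHom, map_apply, Matrix.add_apply,
    Matrix.sub_apply, Matrix.smul_apply, smul_eq_mul, eval_add, eval_sub, eval_mul, eval_C,
    eval_pow, eval_X]

theorem quadratic_dH_singular_iff_common_kernel
    (n : ℕ) (M D K G : Matrix (Fin n) (Fin n) ℝ)
    (hM : M.PosSemidef) (hD : D.PosSemidef) (hK : K.PosSemidef) (hG : Gᵀ = -G) :
    (((X : ℝ[X]) ^ 2) • M.map C - (X : ℝ[X]) • (G - D).map C + K.map C).det = 0 ↔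
      ∃ x : Fin n → ℝ, x ≠ 0 ∧ M.mulVec x = 0 ∧ D.mulVec x = 0 ∧
        K.mulVec x = 0 ∧ G.mulVec x = 0 := by
  constructor
  · intro hdet
    have hdet₁ : (M - (G - D) + K).det = 0 := by
      simpa [hdet] using (eval_det_quadratic M (G - D) K 1).symm
    obtain ⟨v, hv, hPv⟩ := exists_mulVec_eq_zero_iff.mpr hdet₁
    exact ⟨v, hv, mulVec_eq_zero_of_posSemidef_of_transpose_eq_neg hM hD hK hG hPv⟩
  · rintro ⟨x, hx, hMx, hDx, hKx, hGx⟩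
    refine Polynomial.funext fun t => ?_
    rw [eval_det_quadratic, eval_zero, ← exists_mulVec_eq_zero_iff]
    exact ⟨x, hx, by simp [add_mulVec, sub_mulVec, smul_mulVec, hMx, hDx, hKx, hGx]⟩
end
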